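/- arXiv:1501.00265 — 2 statements merged into one kernel-verified Lean document; each statement's English description precedes it below -/
import Mathlib

section
/- Let M be a non-empty inseparable set of essential variables of f and β an s-system of Dis(M,f). Then for every proper subset α ⊊ β, the set M ∪ α is not separable in f. -/
/-! If `g = f(J := c)` had `Ess g = M ∪ α`, pick `x ∈ β \ α` and a distributive set `P` with
`P ∩ β = {x}`. Then `P` avoids `M ∪ α = Ess g`, so substituting `c` on `P` in `g` changes nothing;
but the result is also `f(P := c)` followed by `J := c`, whose essential variables lie among those
of `f(P := c)`, and these miss a variable of `M`. -/

open scoped Classical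

namespace Paper

/-- A `k`-valued function of `n` variables. -/
abbrev Fn (k n : ℕ) : Type := (Fin n → ZMod k) → ZMod k

/-- `x i` is an essential variable of `f`. -/
def Essential {k n : ℕ} (f : Fn k n) (i : Fin n) : Prop :=
  ∃ (a : Fin n → ZMod k) (b : ZMod k), f (Function.update a i b) ≠ f a

/-- The set of essential variables of `f`. -/
def Ess {k n : ℕ} (f : Fn k n) : Set (Fin n) := {i | Essential f i}

/-- The subfunction `f(x i = c)`. -/
def substVar {k n : ℕ} (f : Fn k n) (i : Fin n) (c : ZMod k) : Fn k n :=
  fun a => f (Function.update a i c)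

/-- Substitute the constants `c` for all variables in the set `J`. -/
noncomputable def substSet {k n : ℕ} (f : Fn k n) (J : Set (Fin n)) (c : Fin n → ZMod k) : Fn k n :=
  fun a => f (fun i => if i ∈ J then c i else a i)

/-- `g` is a simple subfunction of `f`: obtained by substituting a constant
for an essential variable of `f`. -/
def SimpleSub {k n : ℕ} (g f : Fn k n) : Prop :=
  ∃ i ∈ Ess f, ∃ c : ZMod k, g = substVar f i c

/-- `Sub f` is the set of all subfunctions of `f` (reflexive-transitive closure of
the simple subfunction relation). -/
def Sub {k n : ℕ} (f : Fn k n) : Set (Fn k n) :=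
  {g | Relation.ReflTransGen (fun u v => SimpleSub v u) f g}

/-- `M` is a separable set of variables in `f`: `M = Ess g` for some subfunction `g`. -/
def Separable {k n : ℕ} (f : Fn k n) (M : Set (Fin n)) : Prop :=
  ∃ g ∈ Sub f, Ess g = M

/-- Separability phrased via simultaneous substitution for a set of variables. -/
def SeparableS {k n : ℕ} (f : Fn k n) (M : Set (Fin n)) : Prop :=
  ∃ (J : Set (Fin n)) (c : Fin n → ZMod k), Ess (substSet f J c) = M

/-- `J` is a set of essential variables disjoint from `M` such that every assignment of
constants to `J` destroys some variable of `M`. -/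
def Kills {k n : ℕ} (f : Fn k n) (M J : Set (Fin n)) : Prop :=
  J ⊆ Ess f ∧ J ∩ M = ∅ ∧ ∀ c : Fin n → ZMod k, ¬ M ⊆ Ess (substSet f J c)

/-- `Dis f M` : the family of all distributive sets of `M` in `f`
(inclusion-minimal sets `J` with `Kills f M J`). -/
def Dis {k n : ℕ} (f : Fn k n) (M : Set (Fin n)) : Set (Set (Fin n)) :=
  {J | Kills f M J ∧ ∀ J' ⊆ J, Kills f M J' → J' = J}

/-- `β` is an s-system of the family `F`. -/
def IsSSystem {n : ℕ} (F : Set (Set (Fin n))) (β : Set (Fin n)) : Prop :=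
  (∀ P ∈ F, (β ∩ P).Nonempty) ∧ ∀ x ∈ β, ∃ P ∈ F, P ∩ β = {x}

/-- `x i` is a strongly essential variable of `f`. -/
def StronglyEssential {k n : ℕ} (f : Fn k n) (i : Fin n) : Prop :=
  i ∈ Ess f ∧ ∃ c : ZMod k, Ess (substVar f i c) = Ess f \ {i}

/-- The number of subfunctions of `f` having exactly `m` essential variables. -/
noncomputable def subCount {k n : ℕ} (f : Fn k n) (m : ℕ) : ℕ :=
  Set.ncard {g ∈ Sub f | (Ess g).ncard = m}

/-- `IsImp f l c` : the list `l` of (variable, constant) substitutions together with the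
final value `c` is an implementation of `f`, i.e. a root-to-leaf path in a reduced
ordered decision diagram of `f`: each substituted variable is essential in the current
subfunction, and the final subfunction is the constant `c`. -/
inductive IsImp {k n : ℕ} : Fn k n → List (Fin n × ZMod k) → ZMod k → Prop
  | const (f : Fn k n) (c : ZMod k) : (∀ a, f a = c) → IsImp f [] c
  | step (f : Fn k n) (i : Fin n) (a : ZMod k) (l : List (Fin n × ZMod k)) (c : ZMod k) :
      i ∈ Ess f → IsImp (substVar f i a) l c → IsImp f ((i, a) :: l) c

/-- The number of implementations of `f`. -/
noncomputable def imp {k n : ℕ} (f : Fn k n) : ℕ :=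
  Set.ncard {p : List (Fin n × ZMod k) × ZMod k | IsImp f p.1 p.2}

variable {k n : ℕ}

open Set

lemma apply_update_of_notMem_ess {f : Fn k n} {j : Fin n} (hj : j ∉ Ess f)
    (a : Fin n → ZMod k) (x : ZMod k) : f (Function.update a j x) = f a := by
  by_contra h
  exact hj ⟨a, x, h⟩

lemma apply_eq_apply_of_eqOn_ess (f : Fn k n) {a b : Fin n → ZMod k}
    (hab : EqOn a b (Ess f)) : f a = f b := by
  suffices ∀ D : Finset (Fin n), (∀ j ∈ D, j ∉ Ess f) →
      ∀ a : Fin n → ZMod k, (∀ i ∉ D, a i = b i) → f a = f b from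
    this {j | j ∉ Ess f} (by simp) a fun i hi => hab (by simpa using hi)
  intro D
  induction D using Finset.induction_on with
  | empty => intro _ a hD; rw [funext fun i => hD i (Finset.notMem_empty i)]
  | insert j D _ ih =>
    intro hD a haD
    rw [← apply_update_of_notMem_ess (hD j (Finset.mem_insert_self j D)) a (b j)]
    refine ih (fun i hi => hD i (Finset.mem_insert_of_mem hi)) _ fun i hi => ?_
    rcases eq_or_ne i j with rfl | hij
    · exact Function.update_self ..
    · rw [Function.update_of_ne hij]
      exact haD i (by simp [hij, hi])

lemma substSet_substSet (f : Fn k n) (S T : Set (Fin n)) (c : Fin n → ZMod k) :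
    substSet (substSet f S c) T c = substSet f (S ∪ T) c := by
  funext a
  simp only [substSet, mem_union]
  congr 1
  funext i
  by_cases hS : i ∈ S <;> simp [hS]

lemma substSet_eq_self_of_disjoint {f : Fn k n} {S : Set (Fin n)} (hS : Disjoint S (Ess f))
    (c : Fin n → ZMod k) : substSet f S c = f := by
  funext a
  refine apply_eq_apply_of_eqOn_ess f fun i hi => ?_
  simp [hS.notMem_of_mem_right hi]

lemma ess_substSet_subset (f : Fn k n) (S : Set (Fin n)) (c : Fin n → ZMod k) :
    Ess (substSet f S c) ⊆ Ess f := by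
  intro i hi
  by_contra hni
  obtain ⟨a, x, hax⟩ := hi
  refine hax (apply_eq_apply_of_eqOn_ess f fun j hj => ?_)
  have hji : j ≠ i := fun e => hni (e ▸ hj)
  by_cases hjS : j ∈ S <;> simp [hjS, Function.update_of_ne hji]

lemma Kills.not_subset_ess_substSet {f : Fn k n} {M P J : Set (Fin n)} (hP : Kills f M P)
    {c : Fin n → ZMod k} (hdisj : Disjoint P (Ess (substSet f J c))) :
    ¬ M ⊆ Ess (substSet f J c) := by
  intro hM
  have hg : substSet f J c = substSet (substSet f P c) J c := by
    rw [← substSet_eq_self_of_disjoint hdisj c, substSet_substSet, substSet_substSet,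
      union_comm]
  exact hP.2.2 c (hM.trans (hg ▸ ess_substSet_subset _ J c))

lemma IsSSystem.exists_disjoint_of_ssubset {F : Set (Set (Fin n))} {β α : Set (Fin n)}
    (hβ : IsSSystem F β) (hα : α ⊂ β) : ∃ P ∈ F, Disjoint P α := by
  obtain ⟨x, hxβ, hxα⟩ := exists_of_ssubset hα
  obtain ⟨P, hPF, hPβ⟩ := hβ.2 x hxβ
  refine ⟨P, hPF, disjoint_left.mpr fun i hiP hiα => hxα ?_⟩
  have : i ∈ P ∩ β := ⟨hiP, hα.1 hiα⟩
  rw [hPβ, mem_singleton_iff] at this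
  exact this ▸ hiα

end Paper

open Paper in
theorem union_proper_subset_not_separable_general {k n : ℕ} (f : Fn k n)
    (M β : Set (Fin n)) (hβ : IsSSystem (Dis f M) β) :
    ∀ α : Set (Fin n), α ⊂ β → ¬ SeparableS f (M ∪ α) := by
  rintro α hα ⟨J, c, hg⟩
  obtain ⟨P, ⟨hP, -⟩, hPα⟩ := hβ.exists_disjoint_of_ssubset hα
  have hPM : Disjoint P M := Set.disjoint_iff_inter_eq_empty.mpr hP.2.1
  exact hP.not_subset_ess_substSet (hg ▸ hPM.union_right hPα) (hg ▸ Set.subset_union_left)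

open Paper in
/-- if `M` is a non-empty inseparable set of essential variables of `f` and
`β` is an s-system of `Dis f M`, then for every proper subset `α ⊊ β` the set `M ∪ α`
is not separable in `f`. -/
theorem union_proper_subset_not_separable {k n : ℕ} (hk : 2 ≤ k) (f : Fn k n)
    (M β : Set (Fin n)) (hM : M ⊆ Ess f) (hMne : M.Nonempty)
    (hins : ¬ SeparableS f M) (hβ : IsSSystem (Dis f M) β) :
    ∀ α : Set (Fin n), α ⊂ β → ¬ SeparableS f (M ∪ α) :=
  union_proper_subset_not_separable_general f M β hβ
end

section
/- Let f : Z_k^n → Z_k depend essentially on all n variables, and let g be a subfunction of f with ess(g) = m < n. Then there exists a variable x_t ∈ Ess(f) \ Ess(g) such that Ess(g) ∪ {x_t} is a separable set of f. -/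
open scoped Classical

/-!
Peel the chain of substitutions leading from `f` to `g` off at the `f` end. If the first
step `f ↦ f(x_i = c)` already loses a variable that `g` keeps, recurse on `f(x_i = c)`.
Otherwise `Ess g = Ess f(x_i = c)`, and `Ess g ∪ {i}` is separable: as long as `f` has an
essential variable `t` outside this set, some constant `d` keeps `x_i` essential in
`f(x_t = d)`, and since `t` is inessential in `f(x_i = c)` we still have
`f(x_t = d)(x_i = c) = f(x_i = c)`, so we may replace `f` by `f(x_t = d)`, which has fewer
essential variables.
-/

namespace Paper

variable {k n : ℕ}

lemma ess_substVar_subset (f : Fn k n) (i : Fin n) (c : ZMod k) :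
    Ess (substVar f i c) ⊆ Ess f \ {i} := by
  rintro j ⟨a, b, hab⟩
  by_cases hji : j = i
  · subst hji
    exact absurd (by simp [substVar, Function.update_idem]) hab
  · refine ⟨⟨Function.update a i c, b, ?_⟩, hji⟩
    simpa [substVar, Function.update_comm hji] using hab

lemma notMem_ess_substVar (f : Fn k n) (i : Fin n) (c : ZMod k) :
    i ∉ Ess (substVar f i c) :=
  fun hi => (ess_substVar_subset f i c hi).2 rfl

lemma ess_substVar_ssubset {f : Fn k n} {i : Fin n} (hi : i ∈ Ess f) (c : ZMod k) :
    Ess (substVar f i c) ⊂ Ess f :=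
  Set.ssubset_iff_subset_ne.2
    ⟨(ess_substVar_subset f i c).trans Set.sdiff_subset,
      fun heq => notMem_ess_substVar f i c (heq ▸ hi)⟩

lemma substVar_eq_self_of_notMem_ess {f : Fn k n} {t : Fin n} (ht : t ∉ Ess f) (d : ZMod k) :
    substVar f t d = f :=
  funext fun a => not_not.1 fun hne => ht ⟨a, d, hne⟩

lemma substVar_comm (f : Fn k n) {i t : Fin n} (h : i ≠ t) (c d : ZMod k) :
    substVar (substVar f t d) i c = substVar (substVar f i c) t d :=
  funext fun a => by simp only [substVar, Function.update_comm h]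

lemma exists_mem_ess_substVar {f : Fn k n} {j t : Fin n} (hj : j ∈ Ess f) (hjt : j ≠ t) :
    ∃ d, j ∈ Ess (substVar f t d) := by
  obtain ⟨a, b, hab⟩ := hj
  refine ⟨a t, a, b, ?_⟩
  have hat : Function.update (Function.update a j b) t (a t) = Function.update a j b := by
    rw [Function.update_eq_self_iff, Function.update_of_ne hjt.symm]
  simpa [substVar, hat] using hab

lemma substVar_mem_sub {f : Fn k n} {i : Fin n} (hi : i ∈ Ess f) (c : ZMod k) :
    substVar f i c ∈ Sub f :=
  Relation.ReflTransGen.single ⟨i, hi, c, rfl⟩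

lemma ess_subset_of_mem_sub {f g : Fn k n} (hg : g ∈ Sub f) : Ess g ⊆ Ess f := by
  induction hg with
  | refl => exact subset_rfl
  | tail _ hstep ih =>
    obtain ⟨i, -, c, rfl⟩ := hstep
    exact ((ess_substVar_subset _ i c).trans Set.sdiff_subset).trans ih

lemma Separable.of_mem_sub {f g : Fn k n} (hg : g ∈ Sub f) {M : Set (Fin n)}
    (hM : Separable g M) : Separable f M :=
  let ⟨h, hh, hE⟩ := hM
  ⟨h, hg.trans hh, hE⟩

theorem separable_ess_substVar_union_singleton (f : Fn k n) {i : Fin n} (hi : i ∈ Ess f)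
    (c : ZMod k) : Separable f (Ess (substVar f i c) ∪ {i}) := by
  induction hN : (Ess f).ncard using Nat.strong_induction_on generalizing f with
  | _ N ih =>
  by_cases hcover : Ess f ⊆ Ess (substVar f i c) ∪ {i}
  · refine ⟨f, Relation.ReflTransGen.refl, hcover.antisymm ?_⟩
    exact Set.union_subset (ess_substVar_ssubset hi c).subset (Set.singleton_subset_iff.2 hi)
  obtain ⟨t, htf, ht⟩ := Set.not_subset.1 hcover
  have hit : i ≠ t := fun h => ht (Or.inr h.symm)
  obtain ⟨d, hid⟩ := exists_mem_ess_substVar hi hit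
  have hfix : substVar (substVar f t d) i c = substVar f i c := by
    rw [substVar_comm f hit, substVar_eq_self_of_notMem_ess (fun h => ht (Or.inl h))]
  have hlt : (Ess (substVar f t d)).ncard < N :=
    hN ▸ Set.ncard_lt_ncard (ess_substVar_ssubset htf d) (Set.toFinite _)
  have hsep := ih _ hlt (substVar f t d) hid rfl
  rw [hfix] at hsep
  exact hsep.of_mem_sub (substVar_mem_sub htf d)

theorem exists_separable_ess_union_singleton {f g : Fn k n} (hg : g ∈ Sub f)
    (hss : Ess g ⊂ Ess f) : ∃ t ∉ Ess g, Separable f (Ess g ∪ {t}) := by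
  induction hg using Relation.ReflTransGen.head_induction_on with
  | refl => exact absurd hss (ssubset_irrefl _)
  | head hstep hsub ih =>
    obtain ⟨i, hi, c, rfl⟩ := hstep
    rcases (ess_subset_of_mem_sub hsub).eq_or_ssubset with heq | hss'
    · rw [heq]
      exact ⟨i, notMem_ess_substVar _ i c, separable_ess_substVar_union_singleton _ hi c⟩
    · obtain ⟨t, ht, hsep⟩ := ih hss'
      exact ⟨t, ht, hsep.of_mem_sub (substVar_mem_sub hi c)⟩

end Paper

open Paper in
theorem extend_subfunction_separable_general {k n : ℕ} (f g : Fn k n)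
    (hfull : Ess f = Set.univ) (hg : g ∈ Sub f) (m : ℕ)
    (hm : (Ess g).ncard = m) (hlt : m < n) :
    ∃ t : Fin n, t ∈ Ess f ∧ t ∉ Ess g ∧ Separable f (Ess g ∪ {t}) := by
  have hss : Ess g ⊂ Ess f := by
    refine (ess_subset_of_mem_sub hg).ssubset_of_ne fun heq => ?_
    rw [heq, hfull, Set.ncard_univ, Nat.card_eq_fintype_card, Fintype.card_fin] at hm
    omega
  obtain ⟨t, htg, hsep⟩ := exists_separable_ess_union_singleton hg hss
  exact ⟨t, hfull ▸ Set.mem_univ t, htg, hsep⟩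

open Paper in
/-- if `f` depends essentially on all `n` variables and `g` is a subfunction
of `f` with fewer than `n` essential variables, then some variable `x t` essential in `f`
but not in `g` makes `Ess g ∪ {t}` separable in `f`. -/
theorem extend_subfunction_separable {k n : ℕ} (hk : 2 ≤ k) (f g : Fn k n)
    (hfull : Ess f = Set.univ) (hg : g ∈ Sub f) (m : ℕ)
    (hm : (Ess g).ncard = m) (hlt : m < n) :
    ∃ t : Fin n, t ∈ Ess f ∧ t ∉ Ess g ∧ Separable f (Ess g ∪ {t}) :=
  extend_subfunction_separable_general f g hfull hg m hm hlt
end
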